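/- arXiv:1709.08510 — 8 statements merged into one kernel-verified Lean document; each statement's English description precedes it below -/
import Mathlib

section
/- Synchronous team semantics for LTL is downward closed: if a team T satisfies an LTL formula φ under synchronous team semantics, then every subteam T' ⊆ T also satisfies φ. -/
/-- A trace assigns to each time point a set of atomic propositions. -/
abbrev Trace (AP : Type) := ℕ → Set AP
/-- A team is a set of traces. -/
abbrev Team (AP : Type) := Set (Trace AP)

/-- The suffix `t[i,∞)` of a trace. -/
def Trace.shift {AP : Type} (t : Trace AP) (i : ℕ) : Trace AP := fun j => t (i + j)

/-- The synchronous suffix `T[i,∞)` of a team. -/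
def Team.shift {AP : Type} (T : Team AP) (i : ℕ) : Team AP := (fun t => t.shift i) '' T

/-- Asynchronous shift: each trace `t` is shifted by its own amount `f t`. -/
def Team.ashift {AP : Type} (T : Team AP) (f : Trace AP → ℕ) : Team AP :=
  (fun t => t.shift (f t)) '' T

/-- LTL formulas in negation normal form. -/
inductive LTL (AP : Type) : Type where
  | atom : AP → LTL AP
  | natom : AP → LTL AP
  | conj : LTL AP → LTL AP → LTL AP
  | disj : LTL AP → LTL AP → LTL AP
  | next : LTL AP → LTL AP
  | fut : LTL AP → LTL AP
  | glob : LTL AP → LTL AP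
  | untl : LTL AP → LTL AP → LTL AP
  | rel : LTL AP → LTL AP → LTL AP

/-- Classical LTL semantics on a single trace. -/
def ltlSat {AP : Type} : LTL AP → Trace AP → Prop
  | .atom p, t => p ∈ t 0
  | .natom p, t => p ∉ t 0
  | .conj φ ψ, t => ltlSat φ t ∧ ltlSat ψ t
  | .disj φ ψ, t => ltlSat φ t ∨ ltlSat ψ t
  | .next φ, t => ltlSat φ (t.shift 1)
  | .fut φ, t => ∃ k, ltlSat φ (t.shift k)
  | .glob φ, t => ∀ k, ltlSat φ (t.shift k)
  | .untl φ ψ, t => ∃ k, ltlSat ψ (t.shift k) ∧ ∀ k' < k, ltlSat φ (t.shift k')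
  | .rel φ ψ, t => ∀ k, ltlSat ψ (t.shift k) ∨ ∃ k' < k, ltlSat φ (t.shift k')

/-- Synchronous team semantics for LTL. -/
def syncSat {AP : Type} : LTL AP → Team AP → Prop
  | .atom p, T => ∀ t ∈ T, p ∈ t 0
  | .natom p, T => ∀ t ∈ T, p ∉ t 0
  | .conj φ ψ, T => syncSat φ T ∧ syncSat ψ T
  | .disj φ ψ, T => ∃ T₁ T₂, T₁ ∪ T₂ = T ∧ syncSat φ T₁ ∧ syncSat ψ T₂
  | .next φ, T => syncSat φ (T.shift 1)
  | .fut φ, T => ∃ k, syncSat φ (T.shift k)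
  | .glob φ, T => ∀ k, syncSat φ (T.shift k)
  | .untl φ ψ, T => ∃ k, syncSat ψ (T.shift k) ∧ ∀ k' < k, syncSat φ (T.shift k')
  | .rel φ ψ, T => ∀ k, syncSat ψ (T.shift k) ∨ ∃ k' < k, syncSat φ (T.shift k')

/-- Asynchronous team semantics for LTL: temporal operators use an
independent time shift `f t` for each trace `t` of the team. -/
def asyncSat {AP : Type} : LTL AP → Team AP → Prop
  | .atom p, T => ∀ t ∈ T, p ∈ t 0
  | .natom p, T => ∀ t ∈ T, p ∉ t 0
  | .conj φ ψ, T => asyncSat φ T ∧ asyncSat ψ T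
  | .disj φ ψ, T => ∃ T₁ T₂, T₁ ∪ T₂ = T ∧ asyncSat φ T₁ ∧ asyncSat ψ T₂
  | .next φ, T => asyncSat φ (T.shift 1)
  | .fut φ, T => ∃ f : Trace AP → ℕ, asyncSat φ (T.ashift f)
  | .glob φ, T => ∀ f : Trace AP → ℕ, asyncSat φ (T.ashift f)
  | .untl φ ψ, T => ∃ f : Trace AP → ℕ, asyncSat ψ (T.ashift f) ∧
      ∀ g : Trace AP → ℕ, (∀ t ∈ T, g t < f t) → asyncSat φ (T.ashift g)
  | .rel φ ψ, T => ∀ f : Trace AP → ℕ, asyncSat ψ (T.ashift f) ∨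
      ∃ g : Trace AP → ℕ, (∀ t ∈ T, g t < f t) ∧ asyncSat φ (T.ashift g)

lemma Team.shift_mono {AP : Type} {T T' : Team AP} (h : T' ⊆ T) (i : ℕ) :
    T'.shift i ⊆ T.shift i :=
  Set.image_mono h

lemma Set.inter_union_inter_eq_of_subset_union {α : Type*} {s t u : Set α} (h : u ⊆ s ∪ t) :
    s ∩ u ∪ t ∩ u = u := by
  rw [← Set.union_inter_distrib_right, Set.inter_eq_right.mpr h]

/-- synchronous team semantics is downward closed. -/
theorem sync_downward_closed {AP : Type} (φ : LTL AP) (T T' : Team AP)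
    (h : syncSat φ T) (hsub : T' ⊆ T) : syncSat φ T' := by
  induction φ generalizing T T' with
  | atom p => exact fun t ht => h t (hsub ht)
  | natom p => exact fun t ht => h t (hsub ht)
  | conj φ ψ ihφ ihψ => exact ⟨ihφ _ _ h.1 hsub, ihψ _ _ h.2 hsub⟩
  | disj φ ψ ihφ ihψ =>
    obtain ⟨T₁, T₂, rfl, h₁, h₂⟩ := h
    exact ⟨T₁ ∩ T', T₂ ∩ T', Set.inter_union_inter_eq_of_subset_union hsub,
      ihφ _ _ h₁ Set.inter_subset_left, ihψ _ _ h₂ Set.inter_subset_left⟩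
  | next φ ih => exact ih _ _ h (Team.shift_mono hsub 1)
  | fut φ ih =>
    obtain ⟨k, hk⟩ := h
    exact ⟨k, ih _ _ hk (Team.shift_mono hsub k)⟩
  | glob φ ih => exact fun k => ih _ _ (h k) (Team.shift_mono hsub k)
  | untl φ ψ ihφ ihψ =>
    obtain ⟨k, hψ, hφ⟩ := h
    exact ⟨k, ihψ _ _ hψ (Team.shift_mono hsub k),
      fun k' hk' => ihφ _ _ (hφ k' hk') (Team.shift_mono hsub k')⟩
  | rel φ ψ ihφ ihψ =>
    intro k
    rcases h k with hψ | ⟨k', hk', hφ⟩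
    · exact Or.inl (ihψ _ _ hψ (Team.shift_mono hsub k))
    · exact Or.inr ⟨k', hk', ihφ _ _ hφ (Team.shift_mono hsub k')⟩
end

section
/- Singleton equivalence for synchronous team semantics: for every trace t and every LTL formula φ in negation normal form, the singleton team {t} satisfies φ under synchronous team semantics if and only if t satisfies φ under classical LTL semantics. -/
lemma team_shift_empty {AP : Type} (k : ℕ) : (∅ : Team AP).shift k = ∅ :=
  Set.image_empty _

lemma team_shift_singleton {AP : Type} (t : Trace AP) (k : ℕ) :
    ({t} : Team AP).shift k = {t.shift k} := Set.image_singleton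

lemma syncSat_empty {AP : Type} (φ : LTL AP) : syncSat φ (∅ : Team AP) := by
  induction φ with
  | atom p => intro t ht; exact absurd ht (Set.notMem_empty t)
  | natom p => intro t ht; exact absurd ht (Set.notMem_empty t)
  | conj φ ψ ihφ ihψ => exact ⟨ihφ, ihψ⟩
  | disj φ ψ ihφ ihψ => exact ⟨∅, ∅, by simp, ihφ, ihψ⟩
  | next φ ih => rw [syncSat, team_shift_empty]; exact ih
  | fut φ ih => exact ⟨0, by rw [team_shift_empty]; exact ih⟩
  | glob φ ih => intro k; rw [team_shift_empty]; exact ih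
  | untl φ ψ ihφ ihψ =>
      exact ⟨0, by rw [team_shift_empty]; exact ihψ, fun k' h => absurd h (Nat.not_lt_zero k')⟩
  | rel φ ψ ihφ ihψ => intro k; left; rw [team_shift_empty]; exact ihψ

/-- singleton equivalence for synchronous team semantics. -/
theorem sync_singleton_equivalence {AP : Type} (t : Trace AP) (φ : LTL AP) :
    syncSat φ ({t} : Team AP) ↔ ltlSat φ t := by
  induction φ generalizing t with
  | atom p => simp [syncSat, ltlSat]
  | natom p => simp [syncSat, ltlSat]
  | conj φ ψ ihφ ihψ => simp [syncSat, ltlSat, ihφ, ihψ]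
  | disj φ ψ ihφ ihψ =>
      constructor
      · rintro ⟨T₁, T₂, hU, h₁, h₂⟩
        have ht : t ∈ T₁ ∪ T₂ := hU ▸ rfl
        rcases ht with ht | ht
        · have hs : T₁ ⊆ {t} := hU ▸ Set.subset_union_left
          have : T₁ = {t} := Set.Subset.antisymm hs (Set.singleton_subset_iff.mpr ht)
          exact Or.inl ((ihφ t).mp (this ▸ h₁))
        · have hs : T₂ ⊆ {t} := hU ▸ Set.subset_union_right
          have : T₂ = {t} := Set.Subset.antisymm hs (Set.singleton_subset_iff.mpr ht)
          exact Or.inr ((ihψ t).mp (this ▸ h₂))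
      · rintro (h | h)
        · exact ⟨{t}, ∅, by simp, (ihφ t).mpr h, syncSat_empty ψ⟩
        · exact ⟨∅, {t}, by simp, syncSat_empty φ, (ihψ t).mpr h⟩
  | next φ ih => rw [syncSat, ltlSat, team_shift_singleton]; exact ih _
  | fut φ ih =>
      simp only [syncSat, ltlSat, team_shift_singleton]
      exact exists_congr fun k => ih _
  | glob φ ih =>
      simp only [syncSat, ltlSat, team_shift_singleton]
      exact forall_congr' fun k => ih _
  | untl φ ψ ihφ ihψ =>
      simp only [syncSat, ltlSat, team_shift_singleton]
      exact exists_congr fun k => and_congr (ihψ _)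
        (forall_congr' fun k' => forall_congr' fun _ => ihφ _)
  | rel φ ψ ihφ ihψ =>
      simp only [syncSat, ltlSat, team_shift_singleton]
      exact forall_congr' fun k => or_congr (ihψ _)
        (exists_congr fun k' => and_congr Iff.rfl (ihφ _))
end

section
/- Singleton equivalence for asynchronous team semantics: for every trace t and LTL formula φ in negation normal form, {t} ⊨ᵃ φ if and only if t ⊨ φ under classical LTL semantics. -/
lemma single_shift {AP : Type} (t : Trace AP) (i : ℕ) :
    ({t} : Team AP).shift i = {t.shift i} := by
  simp [Team.shift]

lemma single_ashift {AP : Type} (t : Trace AP) (f : Trace AP → ℕ) :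
    ({t} : Team AP).ashift f = {t.shift (f t)} := by
  simp [Team.ashift]

lemma empty_shift {AP : Type} (i : ℕ) : (∅ : Team AP).shift i = ∅ := by
  simp [Team.shift]

lemma empty_ashift {AP : Type} (f : Trace AP → ℕ) : (∅ : Team AP).ashift f = ∅ := by
  simp [Team.ashift]

lemma asyncSat_empty {AP : Type} (φ : LTL AP) : asyncSat φ (∅ : Team AP) := by
  induction φ with
  | atom p => intro t ht; exact absurd ht (Set.notMem_empty t)
  | natom p => intro t ht; exact absurd ht (Set.notMem_empty t)
  | conj φ ψ ih1 ih2 => exact ⟨ih1, ih2⟩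
  | disj φ ψ ih1 ih2 => exact ⟨∅, ∅, by simp, ih1, ih2⟩
  | next φ ih => rw [asyncSat, empty_shift]; exact ih
  | fut φ ih => exact ⟨fun _ => 0, by rw [empty_ashift]; exact ih⟩
  | glob φ ih => intro f; rw [empty_ashift]; exact ih
  | untl φ ψ ih1 ih2 =>
      exact ⟨fun _ => 0, by rw [empty_ashift]; exact ih2,
        fun g _ => by rw [empty_ashift]; exact ih1⟩
  | rel φ ψ ih1 ih2 => intro f; left; rw [empty_ashift]; exact ih2

/-- singleton equivalence for asynchronous team semantics. -/
theorem async_singleton_equivalence {AP : Type} (t : Trace AP) (φ : LTL AP) :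
    asyncSat φ ({t} : Team AP) ↔ ltlSat φ t := by
  induction φ generalizing t with
  | atom p => simp [asyncSat, ltlSat]
  | natom p => simp [asyncSat, ltlSat]
  | conj φ ψ ih1 ih2 => simp [asyncSat, ltlSat, ih1, ih2]
  | disj φ ψ ih1 ih2 =>
      constructor
      · rintro ⟨T₁, T₂, hU, h1, h2⟩
        have ht : t ∈ T₁ ∪ T₂ := hU ▸ rfl
        rcases ht with ht | ht
        · left
          have : T₁ = {t} := by
            apply Set.eq_singleton_iff_unique_mem.mpr
            exact ⟨ht, fun x hx => by
              have : x ∈ ({t} : Team AP) := hU ▸ Set.mem_union_left _ hx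
              exact this⟩
          exact (ih1 t).mp (this ▸ h1)
        · right
          have : T₂ = {t} := by
            apply Set.eq_singleton_iff_unique_mem.mpr
            exact ⟨ht, fun x hx => by
              have : x ∈ ({t} : Team AP) := hU ▸ Set.mem_union_right _ hx
              exact this⟩
          exact (ih2 t).mp (this ▸ h2)
      · rintro (h | h)
        · exact ⟨{t}, ∅, by simp, (ih1 t).mpr h, asyncSat_empty ψ⟩
        · exact ⟨∅, {t}, by simp, asyncSat_empty φ, (ih2 t).mpr h⟩
  | next φ ih =>
      rw [show asyncSat (.next φ) ({t} : Team AP) = asyncSat φ (({t} : Team AP).shift 1) from rfl,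
        single_shift, ih]
      rfl
  | fut φ ih =>
      constructor
      · rintro ⟨f, hf⟩
        rw [single_ashift, ih] at hf
        exact ⟨f t, hf⟩
      · rintro ⟨k, hk⟩
        exact ⟨fun _ => k, by rw [single_ashift, ih]; exact hk⟩
  | glob φ ih =>
      constructor
      · intro h k
        have := h (fun _ => k)
        rwa [single_ashift, ih] at this
      · intro h f
        rw [single_ashift, ih]
        exact h (f t)
  | untl φ ψ ih1 ih2 =>
      constructor
      · rintro ⟨f, hψ, hφ⟩
        rw [single_ashift, ih2] at hψ
        refine ⟨f t, hψ, fun k' hk' => ?_⟩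
        have := hφ (fun _ => k') (by simpa using hk')
        rwa [single_ashift, ih1] at this
      · rintro ⟨k, hψ, hφ⟩
        refine ⟨fun _ => k, by rw [single_ashift, ih2]; exact hψ, fun g hg => ?_⟩
        rw [single_ashift, ih1]
        exact hφ (g t) (hg t rfl)
  | rel φ ψ ih1 ih2 =>
      constructor
      · intro h k
        rcases h (fun _ => k) with hψ | ⟨g, hg, hφ⟩
        · left; rwa [single_ashift, ih2] at hψ
        · right
          rw [single_ashift, ih1] at hφ
          exact ⟨g t, hg t rfl, hφ⟩
      · intro h f
        rcases h (f t) with hψ | ⟨k', hk', hφ⟩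
        · left; rw [single_ashift, ih2]; exact hψ
        · right
          exact ⟨fun _ => k', by simpa using hk', by rw [single_ashift, ih1]; exact hφ⟩
end

section
/- Synchronous team semantics is not union closed: with AP = {p}, letting t₁ be the trace with t₁(0) = {p} and t₁(n) = ∅ for n ≥ 1, and t₂ the trace with t₂(1) = {p} and t₂(n) = ∅ otherwise, the teams {t₁} and {t₂} each satisfy F p under synchronous team semantics, but {t₁, t₂} does not. -/
/-- synchronous team semantics is not union closed. -/
theorem sync_not_union_closed :
    let t₁ : Trace Unit := fun n => if n = 0 then {()} else ∅
    let t₂ : Trace Unit := fun n => if n = 1 then {()} else ∅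
    syncSat (.fut (.atom ())) ({t₁} : Team Unit) ∧
    syncSat (.fut (.atom ())) ({t₂} : Team Unit) ∧
    ¬ syncSat (.fut (.atom ())) ({t₁, t₂} : Team Unit) := by
  intro t₁ t₂
  refine ⟨⟨0, ?_⟩, ⟨1, ?_⟩, ?_⟩
  · rintro s ⟨u, rfl, rfl⟩
    simp [Trace.shift, t₁]
  · rintro s ⟨u, rfl, rfl⟩
    simp [Trace.shift, t₂]
  · rintro ⟨k, hk⟩
    have h1 := hk (t₁.shift k) ⟨t₁, Or.inl rfl, rfl⟩
    have h2 := hk (t₂.shift k) ⟨t₂, Or.inr rfl, rfl⟩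
    simp only [Trace.shift, t₁, t₂, Nat.add_zero] at h1 h2
    split_ifs at h1 h2 <;> simp_all
end

section
/- Asynchronous satisfaction does not imply synchronous satisfaction: with AP = {p}, the team T = {t₁, t₂} where t₁(0) = {p}, t₁(n) = ∅ for n ≥ 1, and t₂(1) = {p}, t₂(n) = ∅ otherwise, satisfies F p under asynchronous team semantics but not under synchronous team semantics. -/
/-- asynchronous satisfaction does not imply synchronous
satisfaction. -/
theorem async_not_implies_sync :
    let t₁ : Trace Unit := fun n => if n = 0 then {()} else ∅
    let t₂ : Trace Unit := fun n => if n = 1 then {()} else ∅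
    asyncSat (.fut (.atom ())) ({t₁, t₂} : Team Unit) ∧
    ¬ syncSat (.fut (.atom ())) ({t₁, t₂} : Team Unit) := by
  intro t₁ t₂
  have hne : t₁ ≠ t₂ := by
    intro h
    have := congrFun h 0
    simp [t₁, t₂] at this
  constructor
  · classical
    refine ⟨fun t => if t = t₂ then 1 else 0, ?_⟩
    intro t ht
    rcases ht with ⟨s, hs, rfl⟩
    rcases hs with rfl | rfl
    · simp only []; rw [if_neg hne]; simp [Trace.shift, t₁]
    · simp [Trace.shift, t₂]
  · rintro ⟨k, hk⟩
    have h1 : () ∈ t₁.shift k 0 := hk _ ⟨t₁, Or.inl rfl, rfl⟩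
    have h2 : () ∈ t₂.shift k 0 := hk _ ⟨t₂, Or.inr rfl, rfl⟩
    simp [Trace.shift, t₁, t₂] at h1 h2
    omega
end

section
/- Bounded witnesses for F on finite ultimately periodic teams: let T be a finite team of ultimately periodic traces with common prefix bound s (max of prefix lengths) and L the lcm of period lengths. Then T ⊨ˢ Fφ under synchronous team semantics if and only if there exists k ≤ s + L with T[k,∞) ⊨ˢ φ. -/
/-- The ultimately periodic trace `u · v^ω`. -/
def upTrace {AP : Type} (u v : List (Set AP)) : Trace AP :=
  fun n => if n < u.length then u.getD n ∅ else v.getD ((n - u.length) % v.length) ∅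

lemma upTrace_shift_periodic {AP : Type} (u v : List (Set AP)) (L i : ℕ)
    (hL : v.length ∣ L) (hi : u.length ≤ i) :
    (upTrace u v).shift (i + L) = (upTrace u v).shift i := by
  funext j
  obtain ⟨c, rfl⟩ := hL
  simp only [Trace.shift, upTrace]
  have h1 : ¬ i + v.length * c + j < u.length := by nlinarith [Nat.zero_le (v.length * c)]
  have h2 : ¬ i + j < u.length := by omega
  rw [if_neg h1, if_neg h2]
  have : i + v.length * c + j - u.length = (i + j - u.length) + v.length * c := by
    omega
  rw [this, Nat.add_mul_mod_self_left]

/-- bounded witnesses for `F` on finite ultimately periodic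
teams under synchronous team semantics. -/
theorem sync_fut_bounded_witness {AP ι : Type} [Fintype ι]
    (u v : ι → List (Set AP)) (hv : ∀ i, v i ≠ []) (φ : LTL AP) :
    let T : Team AP := Set.range fun i => upTrace (u i) (v i)
    let s : ℕ := Finset.univ.sup fun i => (u i).length
    let L : ℕ := Finset.univ.lcm fun i => (v i).length
    (syncSat (.fut φ) T ↔ ∃ k ≤ s + L, syncSat φ (T.shift k)) := by
  intro T s L
  have hL0 : 0 < L := by
    rcases Nat.eq_zero_or_pos L with h | h
    · exfalso
      rw [Finset.lcm_eq_zero_iff] at h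
      obtain ⟨i, _, hi⟩ := h
      exact hv i (List.length_eq_zero_iff.mp (by simpa using hi))
    · exact h
  have key : ∀ i, s ≤ i → T.shift (i + L) = T.shift i := by
    intro i hi
    have : ∀ j : ι, (upTrace (u j) (v j)).shift (i + L) = (upTrace (u j) (v j)).shift i := by
      intro j
      exact upTrace_shift_periodic _ _ L i (Finset.dvd_lcm (Finset.mem_univ j))
        (le_trans (Finset.le_sup (f := fun i => (u i).length) (Finset.mem_univ j)) hi)
    simp only [Team.shift, T, ← Set.range_comp]
    exact congrArg Set.range (funext fun j => this j)
  constructor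
  · rintro ⟨k, hk⟩
    induction k using Nat.strong_induction_on with
    | _ k ih =>
      by_cases hks : k ≤ s + L
      · exact ⟨k, hks, hk⟩
      · have hkL : s ≤ k - L := by omega
        have : T.shift ((k - L) + L) = T.shift (k - L) := key _ hkL
        have hkeq : (k - L) + L = k := by omega
        rw [hkeq] at this
        exact ih (k - L) (by omega) (this ▸ hk)
  · rintro ⟨k, _, hk⟩
    exact ⟨k, hk⟩
end

section
/- Bounded witnesses for G on finite ultimately periodic teams: with T, s, L as above, T ⊨ˢ Gφ under synchronous team semantics if and only if T[k,∞) ⊨ˢ φ for all k ≤ s + L. -/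

lemma upTrace_shift_add {AP : Type} (u v : List (Set AP)) (i L : ℕ)
    (hi : u.length ≤ i) (hL : v.length ∣ L) :
    (upTrace u v).shift (i + L) = (upTrace u v).shift i := by
  funext j
  simp only [Trace.shift, upTrace]
  have h1 : ¬ (i + L + j < u.length) := by omega
  have h2 : ¬ (i + j < u.length) := by omega
  rw [if_neg h1, if_neg h2]
  congr 1
  have he : i + L + j - u.length = (i + j - u.length) + L := by omega
  rw [he, Nat.add_mod, Nat.mod_eq_zero_of_dvd hL, Nat.add_zero, Nat.mod_mod_of_dvd _ dvd_rfl]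

/-- bounded witnesses for `G` on finite ultimately periodic
teams under synchronous team semantics. -/
theorem sync_glob_bounded_witness {AP ι : Type} [Fintype ι]
    (u v : ι → List (Set AP)) (hv : ∀ i, v i ≠ []) (φ : LTL AP) :
    let T : Team AP := Set.range fun i => upTrace (u i) (v i)
    let s : ℕ := Finset.univ.sup fun i => (u i).length
    let L : ℕ := Finset.univ.lcm fun i => (v i).length
    (syncSat (.glob φ) T ↔ ∀ k ≤ s + L, syncSat φ (T.shift k)) := by
  intro T s L
  have hL0 : 0 < L := by
    rcases Nat.eq_zero_or_pos L with h | h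
    · exfalso
      rw [Finset.lcm_eq_zero_iff] at h
      obtain ⟨i, -, hi⟩ := h
      exact hv i (List.length_eq_zero_iff.mp hi)
    · exact h
  have hshift : ∀ k, s ≤ k → T.shift (k + L) = T.shift k := by
    intro k hk
    have : ∀ i : ι, (upTrace (u i) (v i)).shift (k + L) = (upTrace (u i) (v i)).shift k := by
      intro i
      exact upTrace_shift_add (u i) (v i) k L
        (le_trans (Finset.le_sup (f := fun i => (u i).length) (Finset.mem_univ i)) hk)
        (Finset.dvd_lcm (Finset.mem_univ i))
    simp only [Team.shift, T, ← Set.range_comp]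
    exact congrArg Set.range (funext fun i => this i)
  constructor
  · intro h k _
    exact h k
  · intro h k
    induction k using Nat.strong_induction_on with
    | _ k ih =>
      by_cases hk : k ≤ s + L
      · exact h k hk
      · have hk2 : s ≤ k - L := by omega
        have := ih (k - L) (by omega)
        rwa [← hshift (k - L) hk2, Nat.sub_add_cancel (by omega)] at this
end

section
/- For splitjunction-free LTL formulas under synchronous team semantics, satisfaction by a Kripke structure's trace team reduces to a single-trace check: defining S₀ = {w_I}, S_{i+1} = successors of S_i, and the trace t over AP ∪ {p̄ | p ∈ AP} by t(i) = {p | p ∈ η(w) for all w ∈ S_i} ∪ {p̄ | p ∉ η(w) for all w ∈ S_i}, we have T(K) ⊨ˢ φ if and only if t ⊨ φ̄ under classical LTL semantics, where φ̄ replaces each negated atom ¬p in φ by the fresh atom p̄. -/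
/-- A Kripke structure over worlds `W` and atomic propositions `AP`. -/
structure Kripke (AP W : Type) where
  R : W → W → Prop
  leftTotal : ∀ w, ∃ w', R w w'
  label : W → Set AP
  init : W

/-- A path of a Kripke structure. -/
def Kripke.isPath {AP W : Type} (K : Kripke AP W) (π : ℕ → W) : Prop :=
  π 0 = K.init ∧ ∀ i, K.R (π i) (π (i + 1))

/-- The team of traces of a Kripke structure. -/
def Kripke.traces {AP W : Type} (K : Kripke AP W) : Team AP :=
  { t | ∃ π : ℕ → W, K.isPath π ∧ t = fun i => K.label (π i) }

/-- `S_i`: the set of worlds reachable from the initial world in `i` steps. -/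
def Kripke.reach {AP W : Type} (K : Kripke AP W) : ℕ → Set W
  | 0 => {K.init}
  | i + 1 => { w' | ∃ w ∈ K.reach i, K.R w w' }

/-- The collapsed trace `t` over `AP ∪ {p̄ | p ∈ AP}` (fresh atoms are the
right summand): `t(i)` contains `p` iff `p` holds in all worlds of `S_i`, and
`p̄` iff `p` fails in all worlds of `S_i`. -/
def Kripke.collapseTrace {AP W : Type} (K : Kripke AP W) : Trace (AP ⊕ AP) :=
  fun i => (Sum.inl '' { p | ∀ w ∈ K.reach i, p ∈ K.label w }) ∪
           (Sum.inr '' { p | ∀ w ∈ K.reach i, p ∉ K.label w })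

/-- Splitjunction-free LTL formulas. -/
def splitFree {AP : Type} : LTL AP → Prop
  | .atom _ => True
  | .natom _ => True
  | .conj φ ψ => splitFree φ ∧ splitFree ψ
  | .disj _ _ => False
  | .next φ => splitFree φ
  | .fut φ => splitFree φ
  | .glob φ => splitFree φ
  | .untl φ ψ => splitFree φ ∧ splitFree ψ
  | .rel φ ψ => splitFree φ ∧ splitFree ψ

/-- `φ̄`: replace every negated atom `¬p` by the fresh atom `p̄`. -/
def barFormula {AP : Type} : LTL AP → LTL (AP ⊕ AP)
  | .atom p => .atom (Sum.inl p)
  | .natom p => .atom (Sum.inr p)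
  | .conj φ ψ => .conj (barFormula φ) (barFormula ψ)
  | .disj φ ψ => .disj (barFormula φ) (barFormula ψ)
  | .next φ => .next (barFormula φ)
  | .fut φ => .fut (barFormula φ)
  | .glob φ => .glob (barFormula φ)
  | .untl φ ψ => .untl (barFormula φ) (barFormula ψ)
  | .rel φ ψ => .rel (barFormula φ) (barFormula ψ)

/-!
Without splitjunctions, synchronous team semantics never splits a team: it only passes to
the synchronous suffixes `T[k,∞)` and, at atoms, asks whether `p` holds in all traces, or
fails in all traces, at time `0`. This is exactly what the collapsed trace of `T` records,
so `T ⊨ˢ φ` iff the collapse of `T` satisfies `φ̄` classically, by induction on `φ`.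
For `T = T(K)`, left-totality lets every world of `S_i` be reached by a path, so the
time-`i` labels of `T(K)` are those of `S_i`, and the collapse of `T(K)` is
`K.collapseTrace`.
-/

def Team.collapse {AP : Type} (T : Team AP) : Trace (AP ⊕ AP) :=
  fun i => (Sum.inl '' { p | ∀ t ∈ T, p ∈ t i }) ∪
           (Sum.inr '' { p | ∀ t ∈ T, p ∉ t i })

theorem Team.collapse_shift {AP : Type} (T : Team AP) (k : ℕ) :
    (T.shift k).collapse = T.collapse.shift k := by
  funext i
  simp [Team.collapse, Team.shift, Trace.shift]

theorem syncSat_iff_ltlSat_collapse {AP : Type} {φ : LTL AP} (hφ : splitFree φ) (T : Team AP) :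
    syncSat φ T ↔ ltlSat (barFormula φ) T.collapse := by
  induction φ generalizing T with
  | atom p => simp [syncSat, ltlSat, barFormula, Team.collapse]
  | natom p => simp [syncSat, ltlSat, barFormula, Team.collapse]
  | conj φ ψ ihφ ihψ => exact and_congr (ihφ hφ.1 T) (ihψ hφ.2 T)
  | disj => exact hφ.elim
  | next φ ih =>
    simp only [syncSat, ltlSat, barFormula, ← Team.collapse_shift]
    exact ih hφ _
  | fut φ ih =>
    simp only [syncSat, ltlSat, barFormula, ← Team.collapse_shift]
    exact exists_congr fun k => ih hφ _
  | glob φ ih =>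
    simp only [syncSat, ltlSat, barFormula, ← Team.collapse_shift]
    exact forall_congr' fun k => ih hφ _
  | untl φ ψ ihφ ihψ =>
    simp only [syncSat, ltlSat, barFormula, ← Team.collapse_shift]
    exact exists_congr fun k => and_congr (ihψ hφ.2 _) (forall₂_congr fun k' _ => ihφ hφ.1 _)
  | rel φ ψ ihφ ihψ =>
    simp only [syncSat, ltlSat, barFormula, ← Team.collapse_shift]
    exact forall_congr' fun k =>
      or_congr (ihψ hφ.2 _) (exists_congr fun k' => and_congr_right' (ihφ hφ.1 _))

namespace Kripke

variable {AP W : Type} (K : Kripke AP W)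

theorem exists_ray (w : W) : ∃ σ : ℕ → W, σ 0 = w ∧ ∀ n, K.R (σ n) (σ (n + 1)) := by
  choose next hnext using K.leftTotal
  exact ⟨fun n => next^[n] w, rfl, fun n => by
    simpa only [Function.iterate_succ_apply'] using hnext _⟩

theorem isPath.mem_reach {K : Kripke AP W} {π : ℕ → W} (hπ : K.isPath π) (i : ℕ) :
    π i ∈ K.reach i := by
  induction i with
  | zero => exact hπ.1
  | succ i ih => exact ⟨π i, ih, hπ.2 i⟩

theorem exists_isPath_of_mem_reach {i : ℕ} {w : W} (hw : w ∈ K.reach i) :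
    ∃ π, K.isPath π ∧ π i = w := by
  induction i generalizing w with
  | zero =>
    obtain ⟨σ, hσ0, hσ⟩ := K.exists_ray w
    exact ⟨σ, ⟨hσ0.trans (Set.mem_singleton_iff.mp hw), hσ⟩, hσ0⟩
  | succ i ih =>
    obtain ⟨v, hv, hvw⟩ := hw
    obtain ⟨π, hπ, hπi⟩ := ih hv
    obtain ⟨σ, hσ0, hσ⟩ := K.exists_ray w
    refine ⟨fun n => if n ≤ i then π n else σ (n - (i + 1)),
      ⟨by simpa using hπ.1, fun n => ?_⟩, by simpa using hσ0⟩
    rcases lt_trichotomy n i with hn | rfl | hn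
    · simpa [hn.le, Nat.succ_le_of_lt hn] using hπ.2 n
    · simpa [hπi, hσ0] using hvw
    · have hsub : n + 1 - (i + 1) = n - (i + 1) + 1 := by omega
      simpa only [if_neg (show ¬n ≤ i by omega), if_neg (show ¬n + 1 ≤ i by omega), hsub]
        using hσ _

theorem forall_mem_traces_iff (P : Set AP → Prop) (i : ℕ) :
    (∀ t ∈ K.traces, P (t i)) ↔ ∀ w ∈ K.reach i, P (K.label w) := by
  constructor
  · intro h w hw
    obtain ⟨π, hπ, rfl⟩ := K.exists_isPath_of_mem_reach hw
    exact h _ ⟨π, hπ, rfl⟩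
  · rintro h t ⟨π, hπ, rfl⟩
    exact h _ (hπ.mem_reach i)

theorem traces_collapse : K.traces.collapse = K.collapseTrace := by
  funext i
  simp only [Team.collapse, collapseTrace,
    Set.ext_iff.mpr fun p => K.forall_mem_traces_iff (p ∈ ·) i,
    Set.ext_iff.mpr fun p => K.forall_mem_traces_iff (p ∉ ·) i]

end Kripke

theorem sync_mc_splitfree_reduces_general {AP W : Type}
    (K : Kripke AP W) (φ : LTL AP) (hφ : splitFree φ) :
    syncSat φ K.traces ↔ ltlSat (barFormula φ) K.collapseTrace := by
  rw [← K.traces_collapse]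
  exact syncSat_iff_ltlSat_collapse hφ K.traces

/-- for splitjunction-free formulas, synchronous team model
checking of a Kripke structure reduces to a single-trace classical check. -/
theorem sync_mc_splitfree_reduces {AP W : Type} [Fintype W]
    (K : Kripke AP W) (φ : LTL AP) (hφ : splitFree φ) :
    syncSat φ K.traces ↔ ltlSat (barFormula φ) K.collapseTrace :=
  sync_mc_splitfree_reduces_general K φ hφ
end
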